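/- arXiv:1805.01953 — 3 statements merged into one kernel-verified Lean document; each statement's English description precedes it below -/
import Mathlib

section
/- Every bipartite graph is good: if G is a bipartite graph, then for every connected induced subgraph H of G and every connected order O of V(H), the greedy colouring algorithm applied to (H,O) produces an optimal colouring of H. -/
/-!
Fix a proper 2-colouring `c` of the induced subgraph `H` and let `a` be the first vertex of the
connected order. Along the order, greedy gives colour 1 exactly to the vertices with `c v = c a`
and colour 2 to the others: a vertex on the side of `a` has no coloured neighbour of colour 1,
while any other vertex has an earlier neighbour, which lies on the side of `a` and has colour 1.
Colour 2 thus only appears at a vertex with a neighbour, where `χ(H) ≥ 2`.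
-/

open Classical in
noncomputable def greedyStep {V : Type*} (G : SimpleGraph V) (f : V → ℕ) (v : V) : V → ℕ :=
  fun u => if u = v then sInf {c : ℕ | 1 ≤ c ∧ ∀ w, G.Adj v w → f w ≠ c} else f u

noncomputable def greedyFrom {V : Type*} (G : SimpleGraph V) (f : V → ℕ) (l : List V) : V → ℕ :=
  l.foldl (greedyStep G) f

noncomputable def greedy {V : Type*} (G : SimpleGraph V) (l : List V) : V → ℕ :=
  greedyFrom G (fun _ => 0) l

open Classical in
noncomputable def greedyStart2 {V : Type*} (G : SimpleGraph V) : List V → V → ℕ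
  | [] => fun _ => 0
  | v :: rest => greedyFrom G (fun u => if u = v then 2 else 0) rest

noncomputable def chi {V : Type*} [Fintype V] (G : SimpleGraph V) : ℕ :=
  sInf {n : ℕ | G.Colorable n}

open Classical in
noncomputable def idx {V : Type*} (l : List V) (v : V) : ℕ := l.idxOf v

noncomputable def maxIdx {V : Type*} (l : List V) (A : Set V) : ℕ := sSup (idx l '' A)
noncomputable def minIdx {V : Type*} (l : List V) (A : Set V) : ℕ := sInf (idx l '' A)

def IsConnOrder {V : Type*} (G : SimpleGraph V) (l : List V) : Prop :=
  l.Nodup ∧ (∀ v : V, v ∈ l) ∧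
    ∀ i : Fin l.length, 0 < i.1 → ∃ j : Fin l.length, j.1 < i.1 ∧ G.Adj (l.get j) (l.get i)

def GoodOrder {V : Type*} [Fintype V] (G : SimpleGraph V) (l : List V) : Prop :=
  ∀ v : V, greedy G l v ≤ chi G

def Good {V : Type*} [Fintype V] (G : SimpleGraph V) : Prop :=
  ∀ s : Finset V, (G.induce (↑s : Set V)).Connected →
    ∀ l : List ↥(↑s : Set V), IsConnOrder (G.induce (↑s : Set V)) l →
      GoodOrder (G.induce (↑s : Set V)) l

def BadOrder {V : Type*} [Fintype V] (G : SimpleGraph V) (l : List V) : Prop :=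
  IsConnOrder G l ∧ ¬ GoodOrder G l

def MinimallyBad {V : Type*} [Fintype V] (G : SimpleGraph V) : Prop :=
  ¬ Good G ∧ ∀ s : Finset V, s ≠ Finset.univ →
    (G.induce (↑s : Set V)).Connected → Good (G.induce (↑s : Set V))

def IsInducedPath {V : Type*} (G : SimpleGraph V) (P : List V) : Prop :=
  P.Nodup ∧ ∀ i j : Fin P.length,
    G.Adj (P.get i) (P.get j) ↔ (i.1 + 1 = j.1 ∨ j.1 + 1 = i.1)

def IsFlatPath {V : Type*} (G : SimpleGraph V) (P : List V) : Prop :=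
  IsInducedPath G P ∧
    ∀ i : Fin P.length, 0 < i.1 → i.1 + 1 < P.length → (G.neighborSet (P.get i)).ncard = 2

def WellOrderedPath {V : Type*} (l P : List V) : Prop :=
  P.Pairwise (fun u v => idx l u < idx l v) ∨ P.Pairwise (fun u v => idx l v < idx l u)

def IsMaxFlatPath {V : Type*} (G : SimpleGraph V) (P : List V) : Prop :=
  IsFlatPath G P ∧ ∀ h : P ≠ [],
    (G.neighborSet (P.head h)).ncard ≠ 2 ∧ (G.neighborSet (P.getLast h)).ncard ≠ 2

def ClawFree {V : Type*} (G : SimpleGraph V) : Prop :=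
  ∀ a b c d : V, G.Adj a b → G.Adj a c → G.Adj a d → b ≠ c → b ≠ d → c ≠ d →
    G.Adj b c ∨ G.Adj b d ∨ G.Adj c d

def IsHole {V : Type*} (G : SimpleGraph V) (C : List V) : Prop :=
  4 ≤ C.length ∧ C.Nodup ∧
    ∀ i j : Fin C.length, G.Adj (C.get i) (C.get j) ↔
      ((i.1 + 1) % C.length = j.1 ∨ (j.1 + 1) % C.length = i.1)

def GemFree {V : Type*} (G : SimpleGraph V) : Prop :=
  ¬ ∃ a b c d e : V, G.Adj a b ∧ G.Adj b c ∧ G.Adj c d ∧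
    ¬ G.Adj a c ∧ ¬ G.Adj a d ∧ ¬ G.Adj b d ∧
    G.Adj e a ∧ G.Adj e b ∧ G.Adj e c ∧ G.Adj e d

def sideColour {V : Type*} (c : V → Fin 2) (a v : V) : ℕ := if c v = c a then 1 else 2

theorem sideColour_mem {V : Type*} (c : V → Fin 2) (a v : V) :
    sideColour c a v ∈ Set.Icc 1 2 := by
  unfold sideColour
  split_ifs <;> simp

theorem sideColour_of_ne {V : Type*} {c : V → Fin 2} {u v : V} (a : V) (h : c u ≠ c v) :
    sideColour c a u = 3 - sideColour c a v := by
  unfold sideColour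
  generalize c u = x, c v = y, c a = z at *
  revert x y z
  decide

section

variable {V : Type*} (G : SimpleGraph V)

theorem greedyFrom_append_singleton (f : V → ℕ) (l : List V) (v : V) :
    greedyFrom G f (l ++ [v]) = greedyStep G (greedyFrom G f l) v :=
  List.foldl_append ..

theorem greedyStep_of_ne (f : V → ℕ) {u v : V} (h : u ≠ v) : greedyStep G f v u = f u :=
  if_neg h

theorem greedyStep_self_eq {f : V → ℕ} {v : V} {c : ℕ} (hc : 1 ≤ c)
    (hfree : ∀ w, G.Adj v w → f w ≠ c) (hused : ∀ d, 1 ≤ d → d < c → ∃ w, G.Adj v w ∧ f w = d) :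
    greedyStep G f v v = c := by
  rw [greedyStep, if_pos rfl]
  refine le_antisymm (Nat.sInf_le ⟨hc, hfree⟩) (le_csInf ⟨c, hc, hfree⟩ ?_)
  rintro d ⟨hd, hdfree⟩
  by_contra! hdc
  obtain ⟨w, hw, hwd⟩ := hused d hd hdc
  exact hdfree w hw hwd

variable {G}

theorem IsConnOrder.exists_adj_of_ne_head {l p s : List V} {a v : V} (hl : IsConnOrder G l)
    (hps : p ++ v :: s = l) (ha : l.head? = some a) (hva : v ≠ a) : ∃ w ∈ p, G.Adj w v := by
  subst hps
  have hp : p ≠ [] := by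
    rintro rfl
    exact hva (Option.some_injective _ ha)
  have hlen : p.length < (p ++ v :: s).length := by simp
  obtain ⟨j, hj, hadj⟩ := hl.2.2 ⟨p.length, hlen⟩ (List.length_pos_iff.2 hp)
  refine ⟨p[j.1], List.getElem_mem hj, ?_⟩
  simpa [List.getElem_append_left hj] using hadj

theorem greedyFrom_prefix_eq_sideColour [DecidableEq V] {l : List V} {a : V}
    (hl : IsConnOrder G l) (C : G.Coloring (Fin 2)) (ha : l.head? = some a) (p s : List V)
    (hps : p ++ s = l) (u : V) :
    greedyFrom G (fun _ => 0) p u = if u ∈ p then sideColour C a u else 0 := by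
  induction p using List.reverseRecOn generalizing s u with
  | nil => rfl
  | append_singleton p v ih =>
    have hps' : p ++ v :: s = l := by simpa using hps
    have hprev := ih (v :: s) hps'
    rw [greedyFrom_append_singleton]
    by_cases huv : u = v
    · subst huv
      rw [if_pos (by simp)]
      obtain ⟨hc1, hc2⟩ := sideColour_mem C a u
      apply greedyStep_self_eq G hc1
      · intro w hw
        have := sideColour_of_ne a (C.valid hw)
        obtain ⟨hw1, hw2⟩ := sideColour_mem C a w
        rw [hprev]
        split_ifs <;> omega
      · intro d hd1 hd2
        have hua : u ≠ a := by rintro rfl; rw [sideColour, if_pos rfl] at hd2; omega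
        obtain ⟨w, hwp, hw⟩ := hl.exists_adj_of_ne_head hps' ha hua
        have := sideColour_of_ne a (C.valid hw)
        exact ⟨w, hw.symm, by rw [hprev, if_pos hwp]; omega⟩
    · rw [greedyStep_of_ne G _ huv, hprev]
      simp [huv]

theorem le_chi_of_le_chromaticNumber [Fintype V] {k : ℕ} (h : (k : ℕ∞) ≤ G.chromaticNumber) :
    k ≤ chi G :=
  le_csInf ⟨_, G.colorable_of_fintype⟩ fun _ hm => by exact_mod_cast h.trans hm.chromaticNumber_le

end

/-- Every bipartite graph is good. -/
theorem stmt0 {V : Type*} [Fintype V] (G : SimpleGraph V) (hbip : G.Colorable 2) :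
    Good G := by
  classical
  intro s _ l hl v
  obtain ⟨C⟩ := hbip.of_hom (SimpleGraph.Embedding.induce _).toHom
  obtain ⟨p, t, hpt⟩ := List.append_of_mem (hl.2.1 v)
  obtain ⟨a, ha⟩ : ∃ a, l.head? = some a := Option.isSome_iff_exists.1 (by simp [hpt])
  have hv := greedyFrom_prefix_eq_sideColour hl C ha l [] (by simp) v
  rw [if_pos (hl.2.1 v)] at hv
  rw [greedy, hv]
  by_cases hva : v = a
  · subst hva
    have : Nonempty ↥(↑s : Set V) := ⟨v⟩
    rw [sideColour, if_pos rfl]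
    exact le_chi_of_le_chromaticNumber (Order.one_le_iff_pos.2 C.colorable.chromaticNumber_pos)
  · obtain ⟨w, -, hw⟩ := hl.exists_adj_of_ne_head hpt.symm ha hva
    exact (sideColour_mem C a v).2.trans
      (le_chi_of_le_chromaticNumber (SimpleGraph.two_le_chromaticNumber_of_adj hw))
end

section
/- Let G be a minimally bad graph and O = [v_1,…,v_n] a bad connected order of G. If x ∈ V(G) with x ≠ v_n and the restriction O∖x of O to V(G)∖{x} is a connected order of G∖x, then there exists a vertex y ≠ x of G such that π_{G∖x, O∖x}(y) ≠ π_{G,O}(y). -/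
/-!
Let `v` be a vertex whose greedy colour exceeds `χ(G)`. The colour of a vertex depends only on
the prefix of the order ending at it, and for `x ≠ v_n` that prefix is a connected order of a
proper connected induced subgraph, which is good by minimality; hence `x` gets a colour at most
`χ(G)`, so `v ≠ x`. Likewise `G ∖ x` is good, so every colour of the greedy colouring of
`(G ∖ x, O ∖ x)` is at most `χ(G ∖ x) ≤ χ(G)`, and `v` itself changes colour.
-/

section

open Function SimpleGraph Finset

variable {V W : Type*} {G : SimpleGraph V} {H : SimpleGraph W}

section Greedy

lemma greedyFrom_append (f : V → ℕ) (l₁ l₂ : List V) :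
    greedyFrom G f (l₁ ++ l₂) = greedyFrom G (greedyFrom G f l₁) l₂ :=
  List.foldl_append

lemma greedyFrom_apply_of_notMem {f : V → ℕ} {l : List V} {v : V} (h : v ∉ l) :
    greedyFrom G f l v = f v := by
  induction l generalizing f with
  | nil => rfl
  | cons a l ih =>
    rw [List.mem_cons, not_or] at h
    exact (ih h.2).trans (if_neg h.1)

lemma greedy_append_apply_of_notMem {l₁ l₂ : List V} {v : V} (h : v ∉ l₂) :
    greedy G (l₁ ++ l₂) v = greedy G l₁ v := by
  rw [greedy, greedyFrom_append, greedyFrom_apply_of_notMem h]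
  rfl

/-- Padding with `0` off the image is harmless because `0` is never a greedy colour. -/
lemma greedyStep_extend (e : G ↪g H) (f : V → ℕ) (v : V) :
    greedyStep H (extend e f 0) (e v) = extend e (greedyStep G f v) 0 := by
  have hfree : {c | 1 ≤ c ∧ ∀ w, H.Adj (e v) w → extend e f 0 w ≠ c} =
      {c | 1 ≤ c ∧ ∀ w, G.Adj v w → f w ≠ c} := by
    ext c
    refine and_congr_right fun hc => ⟨fun h w hw => ?_, fun h w hw => ?_⟩
    · simpa [e.injective.extend_apply] using h (e w) (e.map_adj_iff.2 hw)
    · by_cases hw' : ∃ a, e a = w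
      · obtain ⟨a, rfl⟩ := hw'
        rw [e.injective.extend_apply]
        exact h a (e.map_adj_iff.1 hw)
      · rw [extend_apply' _ _ _ hw']
        exact (Nat.one_pos.trans_le hc).ne
  funext b
  by_cases hb : ∃ a, e a = b
  · obtain ⟨a, rfl⟩ := hb
    simp only [greedyStep, e.injective.extend_apply, hfree]
    split_ifs with h₁ h₂ h₂
    exacts [rfl, absurd (e.injective h₁) h₂, absurd (congrArg e h₂) h₁, rfl]
  · have hbv : b ≠ e v := fun h => hb ⟨v, h.symm⟩
    simp only [greedyStep, if_neg hbv, extend_apply' _ _ _ hb]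

lemma greedyFrom_map_embedding (e : G ↪g H) (f : V → ℕ) (l : List V) :
    greedyFrom H (extend e f 0) (l.map e) = extend e (greedyFrom G f l) 0 := by
  induction l generalizing f with
  | nil => rfl
  | cons v l ih =>
    simp only [List.map_cons, greedyFrom, List.foldl_cons] at ih ⊢
    rw [greedyStep_extend, ih]

lemma greedy_map_embedding (e : G ↪g H) (l : List V) (v : V) :
    greedy H (l.map e) (e v) = greedy G l v := by
  have hzero : (fun _ => 0 : W → ℕ) = extend e (fun _ => 0) 0 := (extend_const e 0).symm
  rw [greedy, hzero, greedyFrom_map_embedding, e.injective.extend_apply]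
  rfl

lemma greedy_induce (s : Set V) (l : List s) (v : s) :
    greedy (G.induce s) l v = greedy G (l.map (↑)) v :=
  (greedy_map_embedding (Embedding.induce s) l v).symm

end Greedy

lemma chi_le_of_hom [Fintype V] [Fintype W] (f : G →g H) : chi G ≤ chi H :=
  Nat.sInf_le ((Nat.sInf_mem (s := {n | H.Colorable n}) ⟨_, H.colorable_of_fintype⟩).of_hom f)

/-- `IsConnOrder G l` unfolds to `l.Nodup ∧ (∀ v, v ∈ l) ∧ IsConnSeq G l`. -/
def IsConnSeq (G : SimpleGraph V) (l : List V) : Prop :=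
  ∀ i : Fin l.length, 0 < i.1 → ∃ j : Fin l.length, j.1 < i.1 ∧ G.Adj (l.get j) (l.get i)

namespace IsConnSeq

variable {l : List V}

lemma of_prefix {p : List V} (hl : IsConnSeq G l) (hp : p <+: l) : IsConnSeq G p := by
  intro i hi
  obtain ⟨j, hji, hadj⟩ := hl ⟨i, i.2.trans_le hp.length_le⟩ hi
  refine ⟨⟨j, hji.trans i.2⟩, hji, ?_⟩
  simpa [hp.getElem] using hadj

lemma of_map (e : G ↪g H) (hl : IsConnSeq H (l.map e)) : IsConnSeq G l := by
  intro i hi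
  obtain ⟨j, hji, hadj⟩ := hl ⟨i, by simp⟩ hi
  refine ⟨⟨j, by simpa using j.2⟩, hji, ?_⟩
  simpa using hadj

lemma reachable_getElem_zero (hl : IsConnSeq G l) (h0 : 0 < l.length) :
    ∀ i (hi : i < l.length), G.Reachable l[0] l[i] := by
  intro i
  induction i using Nat.strong_induction_on with
  | _ i ih =>
    intro hi
    rcases Nat.eq_zero_or_pos i with rfl | hpos
    · rfl
    · obtain ⟨j, hji, hadj⟩ := hl ⟨i, hi⟩ hpos
      exact (ih j hji j.2).trans hadj.reachable

end IsConnSeq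

lemma IsConnOrder.connected [Nonempty V] {l : List V} (hl : IsConnOrder G l) : G.Connected := by
  obtain ⟨v⟩ := ‹Nonempty V›
  have h0 : 0 < l.length := List.length_pos_of_mem (hl.2.1 v)
  refine (connected_iff_exists_forall_reachable G).2 ⟨l[0], fun u => ?_⟩
  obtain ⟨i, hi, rfl⟩ := List.getElem_of_mem (hl.2.1 u)
  exact IsConnSeq.reachable_getElem_zero hl.2.2 h0 i hi

lemma exists_isConnOrder_induce {l : List V} {t : Finset V} (hnd : l.Nodup)
    (hmem : ∀ v, v ∈ l ↔ v ∈ t) (hl : IsConnSeq G l) :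
    ∃ lt : List (t : Set V), lt.map (↑) = l ∧ IsConnOrder (G.induce t) lt := by
  set lt : List (t : Set V) := l.pmap Subtype.mk fun v hv => (hmem v).1 hv
  have hmap : lt.map (↑) = l := by simp [lt, List.map_pmap]
  refine ⟨lt, hmap, .of_map _ (hmap ▸ hnd), fun ⟨v, hv⟩ => ?_,
    IsConnSeq.of_map (Embedding.induce _) (hmap ▸ hl)⟩
  simpa [lt, List.mem_pmap] using (hmem v).2 hv

lemma Good.goodOrder [Fintype V] (hG : Good G) {l : List V} (hl : IsConnOrder G l) :
    GoodOrder G l := by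
  intro v
  obtain ⟨lt, hmap, hlt⟩ :=
    exists_isConnOrder_induce (t := univ) hl.1 (fun u => by simp [hl.2.1 u]) hl.2.2
  have : Nonempty ((univ : Finset V) : Set V) := ⟨⟨v, by simp⟩⟩
  calc greedy G l v = greedy (G.induce (univ : Finset V)) lt ⟨v, by simp⟩ := by
        rw [greedy_induce, hmap]
    _ ≤ chi (G.induce (univ : Finset V)) := hG _ hlt.connected lt hlt _
    _ ≤ chi G := chi_le_of_hom (Embedding.induce _).toHom

namespace MinimallyBad

variable [Fintype V] (hG : MinimallyBad G)
include hG

lemma greedy_induce_le_chi {t : Finset V} (ht : t ≠ univ) {lt : List (t : Set V)}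
    (hlt : IsConnOrder (G.induce t) lt) (y : (t : Set V)) : greedy (G.induce t) lt y ≤ chi G := by
  have : Nonempty (t : Set V) := ⟨y⟩
  calc _ ≤ chi (G.induce t) := (hG.2 t ht hlt.connected).goodOrder hlt y
    _ ≤ chi G := chi_le_of_hom (Embedding.induce _).toHom

lemma greedy_le_chi_of_ne_getLast [DecidableEq V] {l : List V} (hl : IsConnOrder G l) {vn x : V}
    (hvn : l.getLast? = some vn) (hx : x ≠ vn) : greedy G l x ≤ chi G := by
  obtain ⟨l₁, l₂, rfl⟩ := List.append_of_mem (hl.2.1 x)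
  set p := l₁ ++ [x]
  have hsplit : l₁ ++ x :: l₂ = p ++ l₂ := by simp [p]
  rw [hsplit] at hl hvn ⊢
  have hdisj := List.disjoint_of_nodup_append hl.1
  have hvn₂ : vn ∈ l₂ := by
    rw [List.getLast?_append] at hvn
    cases h₂ : l₂.getLast? with
    | none => exact absurd (by simpa [h₂, p] using hvn) hx
    | some w =>
      simp only [h₂, Option.some_or, Option.some_inj] at hvn
      exact hvn ▸ List.mem_of_getLast? h₂
  obtain ⟨lt, hmap, hlt⟩ := exists_isConnOrder_induce (t := p.toFinset)
    (List.Nodup.of_append_left hl.1) (fun _ => List.mem_toFinset.symm)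
    (IsConnSeq.of_prefix hl.2.2 (List.prefix_append _ _))
  have hxp : x ∈ (p.toFinset : Set V) := by simp [p]
  have hpu : p.toFinset ≠ univ := fun h => hdisj (List.mem_toFinset.1 (h ▸ mem_univ vn)) hvn₂
  calc greedy G (p ++ l₂) x = greedy G p x :=
        greedy_append_apply_of_notMem fun h => hdisj (by simp [p]) h
    _ = greedy (G.induce p.toFinset) lt ⟨x, hxp⟩ := by rw [greedy_induce, hmap]
    _ ≤ chi G := hG.greedy_induce_le_chi hpu hlt _

end MinimallyBad

end

theorem stmt3_general {V : Type*} [Fintype V] [DecidableEq V] (G : SimpleGraph V) (l : List V)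
    (hmin : MinimallyBad G) (hbad : BadOrder G l)
    (vn : V) (hvn : l.getLast? = some vn)
    (x : V) (hx : x ≠ vn)
    (s : Finset V) (hs : s = Finset.univ.erase x)
    (l' : List ↥(↑s : Set V))
    (hconn : IsConnOrder (G.induce (↑s : Set V)) l') :
    ∃ y : ↥(↑s : Set V),
      greedy (G.induce (↑s : Set V)) l' y ≠ greedy G l (y : V) := by
  obtain ⟨hl, hnotGood⟩ := hbad
  obtain ⟨v, hv⟩ : ∃ v, chi G < greedy G l v := by simpa [GoodOrder] using hnotGood
  have hvx : v ≠ x := fun h => (h ▸ hmin.greedy_le_chi_of_ne_getLast hl hvn hx).not_gt hv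
  have hvs : v ∈ (s : Set V) := by simp [hs, hvx]
  have hsu : s ≠ Finset.univ := by simp [hs, Ne, Finset.erase_eq_self]
  exact ⟨⟨v, hvs⟩, fun h => (hmin.greedy_induce_le_chi hsu hconn _).not_gt (h ▸ hv)⟩

theorem stmt3 {V : Type*} [Fintype V] [DecidableEq V] (G : SimpleGraph V) (l : List V)
    (hmin : MinimallyBad G) (hbad : BadOrder G l)
    (vn : V) (hvn : l.getLast? = some vn)
    (x : V) (hx : x ≠ vn)
    (s : Finset V) (hs : s = Finset.univ.erase x)
    (l' : List ↥(↑s : Set V)) (hl' : l'.map Subtype.val = l.erase x)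
    (hconn : IsConnOrder (G.induce (↑s : Set V)) l') :
    ∃ y : ↥(↑s : Set V),
      greedy (G.induce (↑s : Set V)) l' y ≠ greedy G l (y : V) :=
  stmt3_general G l hmin hbad vn hvn x hx s hs l' hconn
end

section
/- Let G be a minimally bad graph and O = [v_1,…,v_n] a bad connected order of G. Let v ∈ V(G) and let S be a cutset of the induced subgraph G_{≤v}. If there exists a connected component C of G_{≤v}∖S such that min(C) < min(S), then v_1 ∈ C. -/
/-!
Let `u` be the earliest vertex of the component `C`. If `u ≠ v₁`, the connected order gives an
earlier neighbour `w` of `u`. Then `w ∈ G_{≤v}` since `w < u ≤ v`, and `w ∉ S` since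
`w < u = min C < min S`; so `w` lies in `C` and precedes `min C`, a contradiction.
-/

open SimpleGraph

section

variable {V : Type*}

theorem idx_eq_idxOf [DecidableEq V] (l : List V) (u : V) : idx l u = l.idxOf u := by
  unfold idx; congr!

theorem eq_of_head?_eq_some_of_idx_eq_zero {l : List V} {v₁ u : V} (hv₁ : l.head? = some v₁)
    (hu : idx l u = 0) : u = v₁ := by
  classical
  rw [idx_eq_idxOf, List.idxOf_eq_zero_iff_eq_nil_or_head_eq] at hu
  rcases hu with rfl | hu
  · simp at hv₁
  · exact Option.some_injective _ (hu.symm.trans hv₁)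

theorem minIdx_le (l : List V) {X : Set V} {x : V} (hx : x ∈ X) : minIdx l X ≤ idx l x :=
  Nat.sInf_le ⟨x, hx, rfl⟩

theorem exists_idx_eq_minIdx (l : List V) {X : Set V} (hX : X.Nonempty) :
    ∃ x ∈ X, idx l x = minIdx l X :=
  Nat.sInf_mem (hX.image (idx l))

theorem IsConnOrder.exists_adj_idx_lt {G : SimpleGraph V} {l : List V} (hl : IsConnOrder G l)
    {u : V} (hu : idx l u ≠ 0) : ∃ w, idx l w < idx l u ∧ G.Adj w u := by
  classical
  obtain ⟨hnd, hmem, hstep⟩ := hl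
  have hlen : idx l u < l.length := by
    rw [idx_eq_idxOf]; exact List.idxOf_lt_length_iff.2 (hmem u)
  obtain ⟨j, hj, hadj⟩ := hstep ⟨idx l u, hlen⟩ (Nat.pos_of_ne_zero hu)
  refine ⟨l.get j, ?_, ?_⟩
  · rwa [idx_eq_idxOf, List.get_eq_getElem, hnd.idxOf_getElem]
  · simpa [List.get_eq_getElem, idx_eq_idxOf] using hadj

theorem ConnectedComponent.val_supp_nonempty {T : Set V} {G : SimpleGraph V}
    (c : (G.induce T).ConnectedComponent) : (Subtype.val '' c.supp).Nonempty :=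
  let ⟨u, hu⟩ := c.nonempty_supp
  ⟨u.1, u, hu, rfl⟩

theorem IsConnOrder.head_mem_supp {G : SimpleGraph V} {l : List V} (hl : IsConnOrder G l)
    {v₁ : V} (hv₁ : l.head? = some v₁) {T : Set V} (c : (G.induce T).ConnectedComponent)
    (hT : ∀ w, idx l w < minIdx l (Subtype.val '' c.supp) → w ∈ T) :
    v₁ ∈ Subtype.val '' c.supp := by
  obtain ⟨_, ⟨u, hu, rfl⟩, hmin⟩ :=
    exists_idx_eq_minIdx l (ConnectedComponent.val_supp_nonempty c)
  by_cases h0 : idx l u = 0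
  · exact ⟨u, hu, eq_of_head?_eq_some_of_idx_eq_zero hv₁ h0⟩
  obtain ⟨w, hwu, hadj⟩ := hl.exists_adj_idx_lt h0
  have hwT : w ∈ T := hT w (hmin ▸ hwu)
  have hwc : (⟨w, hwT⟩ : T) ∈ c.supp := by
    rw [ConnectedComponent.mem_supp_iff] at hu ⊢
    rw [← hu]
    exact ConnectedComponent.connectedComponentMk_eq_of_adj (G := G.induce T) hadj
  have := minIdx_le l (show w ∈ Subtype.val '' c.supp from ⟨⟨w, hwT⟩, hwc, rfl⟩)
  omega

end

theorem stmt8_general {V : Type*} [Fintype V] (G : SimpleGraph V) (l : List V)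
    (hbad : BadOrder G l)
    (v1 : V) (hv1 : l.head? = some v1)
    (v : V) (A : Set V) (hA : A = {u : V | idx l u ≤ idx l v})
    (S : Finset V)
    (c : (G.induce (A \ (↑S : Set V))).ConnectedComponent)
    (hlt : minIdx l (Subtype.val '' c.supp) < minIdx l (↑S : Set V)) :
    v1 ∈ Subtype.val '' c.supp := by
  subst hA
  refine hbad.1.head_mem_supp hv1 c fun w hw => ⟨?_, fun hwS => ?_⟩
  · obtain ⟨_, ⟨x, hx, rfl⟩⟩ := ConnectedComponent.val_supp_nonempty c
    exact (hw.trans_le (minIdx_le l ⟨x, hx, rfl⟩)).le.trans x.2.1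
  · exact absurd (minIdx_le l hwS) (by omega)

theorem stmt8 {V : Type*} [Fintype V] (G : SimpleGraph V) (l : List V)
    (hmin : MinimallyBad G) (hbad : BadOrder G l)
    (v1 : V) (hv1 : l.head? = some v1)
    (v : V) (A : Set V) (hA : A = {u : V | idx l u ≤ idx l v})
    (S : Finset V) (hS : (↑S : Set V) ⊆ A)
    (hcut : ¬ (G.induce (A \ (↑S : Set V))).Preconnected)
    (c : (G.induce (A \ (↑S : Set V))).ConnectedComponent)
    (hlt : minIdx l (Subtype.val '' c.supp) < minIdx l (↑S : Set V)) :
    v1 ∈ Subtype.val '' c.supp :=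
  stmt8_general G l hbad v1 hv1 v A hA S c hlt
end
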